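/- arXiv:2202.06828 — 4 statements merged into one kernel-verified Lean document; each statement's English description precedes it below -/
import Mathlib

section
/- Suppose a sequence (v_t) in ℝ^K satisfies ‖v_{t+1} - v_t‖ ≤ α_t(A‖v_t‖ + B) for A > 0, B ≥ 0, α_t > 0. If α_{t1,t2-1} := Σ_{j=t1}^{t2-1} α_j ≤ 1/(4A), then for all t ∈ [t1, t2]: ‖v_t - v_{t1}‖ ≤ 2α_{t1,t2-1}(A‖v_{t1}‖ + B), and also ‖v_t - v_{t1}‖ ≤ 4α_{t1,t2-1}(A‖v_{t2}‖ + B). -/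
theorem discrete_gronwall_diff_bound {K : ℕ} (A B : ℝ) (hA : 0 < A) (hB : 0 ≤ B)
    (v : ℕ → EuclideanSpace ℝ (Fin K)) (α : ℕ → ℝ) (hα : ∀ t, 0 < α t)
    (hrec : ∀ t, ‖v (t + 1) - v t‖ ≤ α t * (A * ‖v t‖ + B))
    (t1 t2 : ℕ) (ht12 : t1 ≤ t2)
    (hsum : (∑ j ∈ Finset.Ico t1 t2, α j) ≤ 1 / (4 * A)) :
    ∀ t, t1 ≤ t → t ≤ t2 →
      ‖v t - v t1‖ ≤ 2 * (∑ j ∈ Finset.Ico t1 t2, α j) * (A * ‖v t1‖ + B) ∧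
      ‖v t - v t1‖ ≤ 4 * (∑ j ∈ Finset.Ico t1 t2, α j) * (A * ‖v t2‖ + B) := by
  set S := ∑ j ∈ Finset.Ico t1 t2, α j with hSdef
  have hS0 : 0 ≤ S := Finset.sum_nonneg fun j _ => (hα j).le
  have hAS : A * S ≤ 1 / 4 := by
    have h4A : 0 < 4 * A := by positivity
    rw [le_div_iff₀ h4A] at hsum
    nlinarith
  set C := A * ‖v t1‖ + B with hCdef
  have hC0 : 0 ≤ C := by positivity
  have hsub : ∀ t, t ≤ t2 → (∑ j ∈ Finset.Ico t1 t, α j) ≤ S :=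
    fun t ht => Finset.sum_le_sum_of_subset_of_nonneg
      (Finset.Ico_subset_Ico le_rfl ht) (fun j _ _ => (hα j).le)
  have main : ∀ t, t1 ≤ t → t ≤ t2 →
      ‖v t - v t1‖ ≤ 2 * (∑ j ∈ Finset.Ico t1 t, α j) * C := by
    intro t ht1
    induction t, ht1 using Nat.le_induction with
    | base => intro _; simp
    | succ t ht1t ih =>
      intro ht2
      have ht2' : t ≤ t2 := le_of_lt (Nat.lt_of_succ_le ht2)
      have ih' := ih ht2'
      have hsub' := hsub t ht2'
      have hvt : ‖v t‖ ≤ ‖v t1‖ + 2 * S * C := by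
        calc ‖v t‖ ≤ ‖v t1‖ + ‖v t - v t1‖ := by
              have := norm_add_le (v t1) (v t - v t1); simpa using this
          _ ≤ ‖v t1‖ + 2 * S * C := by
              have : 2 * (∑ j ∈ Finset.Ico t1 t, α j) * C ≤ 2 * S * C := by
                nlinarith
              linarith
      have hstep : ‖v (t + 1) - v t1‖ ≤ ‖v t - v t1‖ + α t * (A * ‖v t‖ + B) := by
        calc ‖v (t + 1) - v t1‖ ≤ ‖v (t + 1) - v t‖ + ‖v t - v t1‖ := by
              have := norm_add_le (v (t + 1) - v t) (v t - v t1); simpa using this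
          _ ≤ ‖v t - v t1‖ + α t * (A * ‖v t‖ + B) := by
              have := hrec t; linarith
      have hkey : α t * (A * ‖v t‖ + B) ≤ 2 * α t * C := by
        have hα0 := (hα t).le
        have h1 : A * ‖v t‖ + B ≤ C + 2 * (A * S) * C := by
          have := mul_le_mul_of_nonneg_left hvt hA.le
          nlinarith
        have h2 : A * ‖v t‖ + B ≤ 2 * C := by nlinarith
        nlinarith
      rw [Finset.sum_Ico_succ_top ht1t]
      nlinarith
  have hend := main t2 ht12 le_rfl
  have hendS : ‖v t2 - v t1‖ ≤ 2 * S * C := by simpa [hSdef] using hend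
  have hCD : C ≤ 2 * (A * ‖v t2‖ + B) := by
    have htri : ‖v t1‖ ≤ ‖v t2‖ + ‖v t2 - v t1‖ := by
      have := norm_add_le (v t2) (v t1 - v t2)
      simpa [norm_sub_rev (v t2) (v t1)] using this
    nlinarith [mul_le_mul_of_nonneg_left htri hA.le]
  intro t ht1 ht2
  have h1 : ‖v t - v t1‖ ≤ 2 * S * C := by
    have := main t ht1 ht2
    have := hsub t ht2
    nlinarith
  exact ⟨h1, by nlinarith⟩
end

section
/- Let D be a diagonal positive definite matrix in ℝ^{n×n}, P a row-stochastic matrix whose invariant distribution is the diagonal of D (i.e., d^T P = d^T where d = diag(D)), and γ ∈ [0, 1). Then for every q ∈ ℝ^n, ‖Pq‖_D ≤ ‖q‖_D, where ‖q‖_D = √(q^T D q). Consequently the matrix A = D(γP - I) satisfies q^T A q ≤ -(1-γ)‖q‖_D² ≤ 0 for all q. -/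
open Matrix in
theorem stationary_weighted_contraction {n : ℕ} (d : Fin n → ℝ)
    (P : Matrix (Fin n) (Fin n) ℝ) (γ : ℝ)
    (hP_nonneg : ∀ i j, 0 ≤ P i j) (hP_row : ∀ i, ∑ j, P i j = 1)
    (hd_pos : ∀ i, 0 < d i) (hd_sum : ∑ i, d i = 1)
    (hstat : ∀ j, ∑ i, d i * P i j = d j)
    (hγ0 : 0 ≤ γ) (hγ1 : γ < 1) :
    ∀ q : Fin n → ℝ,
      (∑ i, d i * (P.mulVec q i) ^ 2) ≤ (∑ i, d i * (q i) ^ 2) ∧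
      q ⬝ᵥ ((Matrix.diagonal d * (γ • P - 1)).mulVec q) ≤
        -(1 - γ) * ∑ i, d i * (q i) ^ 2 := by
  intro q
  set S := ∑ i, d i * (q i) ^ 2 with hS
  have hS_nonneg : 0 ≤ S := Finset.sum_nonneg fun i _ =>
    mul_nonneg (hd_pos i).le (sq_nonneg _)
  -- Jensen: (Pq)_i^2 ≤ ∑_j P i j * q j ^ 2
  have hjensen : ∀ i, (P.mulVec q i) ^ 2 ≤ ∑ j, P i j * (q j) ^ 2 := by
    intro i
    have key : (∑ j, P i j * q j) ^ 2 ≤ (∑ j, P i j) * ∑ j, P i j * (q j) ^ 2 := by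
      have := Finset.sum_mul_sq_le_sq_mul_sq Finset.univ
        (fun j => Real.sqrt (P i j)) (fun j => Real.sqrt (P i j) * q j)
      have e1 : ∀ j : Fin n, Real.sqrt (P i j) * (Real.sqrt (P i j) * q j) = P i j * q j := by
        intro j
        rw [← mul_assoc, Real.mul_self_sqrt (hP_nonneg i j)]
      have e2 : ∀ j : Fin n, Real.sqrt (P i j) ^ 2 = P i j := fun j =>
        Real.sq_sqrt (hP_nonneg i j)
      have e3 : ∀ j : Fin n, (Real.sqrt (P i j) * q j) ^ 2 = P i j * (q j) ^ 2 := by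
        intro j; rw [mul_pow, e2]
      simp only [e1, e2, e3] at this
      exact this
    rw [hP_row i, one_mul] at key
    simpa [Matrix.mulVec, dotProduct] using key
  have hT : (∑ i, d i * (P.mulVec q i) ^ 2) ≤ S := by
    calc ∑ i, d i * (P.mulVec q i) ^ 2
        ≤ ∑ i, d i * ∑ j, P i j * (q j) ^ 2 := by
          apply Finset.sum_le_sum
          intro i _
          exact mul_le_mul_of_nonneg_left (hjensen i) (hd_pos i).le
      _ = ∑ j, (∑ i, d i * P i j) * (q j) ^ 2 := by
          simp_rw [Finset.mul_sum, Finset.sum_mul]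
          rw [Finset.sum_comm]
          exact Finset.sum_congr rfl fun j _ => Finset.sum_congr rfl fun i _ => by ring
      _ = S := by
          apply Finset.sum_congr rfl
          intro j _
          rw [hstat j]
  refine ⟨hT, ?_⟩
  -- Cauchy–Schwarz: U ≤ S
  set U := ∑ i, d i * q i * (P.mulVec q i) with hU
  have hU_sq : U ^ 2 ≤ S * ∑ i, d i * (P.mulVec q i) ^ 2 := by
    have := Finset.sum_mul_sq_le_sq_mul_sq Finset.univ
      (fun i => Real.sqrt (d i) * q i) (fun i => Real.sqrt (d i) * P.mulVec q i)
    have e1 : ∀ i : Fin n, Real.sqrt (d i) * q i * (Real.sqrt (d i) * P.mulVec q i)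
        = d i * q i * P.mulVec q i := by
      intro i
      rw [show Real.sqrt (d i) * q i * (Real.sqrt (d i) * P.mulVec q i)
          = (Real.sqrt (d i) * Real.sqrt (d i)) * (q i * P.mulVec q i) by ring,
        Real.mul_self_sqrt (hd_pos i).le]
      ring
    have e2 : ∀ i : Fin n, (Real.sqrt (d i) * q i) ^ 2 = d i * (q i) ^ 2 := by
      intro i; rw [mul_pow, Real.sq_sqrt (hd_pos i).le]
    have e3 : ∀ i : Fin n, (Real.sqrt (d i) * P.mulVec q i) ^ 2 = d i * (P.mulVec q i) ^ 2 := by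
      intro i; rw [mul_pow, Real.sq_sqrt (hd_pos i).le]
    simp only [e1, e2, e3] at this
    exact this
  have hUS : U ≤ S := by nlinarith [hT, hS_nonneg, hU_sq]
  -- expand the quadratic form
  have hexp : q ⬝ᵥ ((Matrix.diagonal d * (γ • P - 1)).mulVec q) = γ * U - S := by
    have hentry : ∀ i j, (Matrix.diagonal d * (γ • P - 1)) i j
        = d i * (γ * P i j - if i = j then 1 else 0) := by
      intro i j
      rw [Matrix.diagonal_mul]
      simp [Matrix.sub_apply, Matrix.one_apply]
    have hrow : ∀ i, ((Matrix.diagonal d * (γ • P - 1)).mulVec q) i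
        = d i * γ * (P.mulVec q i) - d i * q i := by
      intro i
      simp only [Matrix.mulVec, dotProduct, hentry]
      have key : ∀ j, d i * (γ * P i j - if i = j then 1 else 0) * q j
          = d i * γ * (P i j * q j) - (if i = j then d i * q j else 0) := by
        intro j; by_cases h : i = j <;> simp [h] <;> ring
      simp_rw [key]
      rw [Finset.sum_sub_distrib, ← Finset.mul_sum, Finset.sum_ite_eq Finset.univ i]
      simp
    simp only [dotProduct, hrow, hU, hS]
    rw [Finset.mul_sum, ← Finset.sum_sub_distrib]
    apply Finset.sum_congr rfl
    intro i _
    ring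
  rw [hexp]
  nlinarith [hUS, hS_nonneg]
end

section
/- Let X ∈ ℝ^{n×K} have full column rank, D = diag(d) with d a stationary distribution of row-stochastic P and d > 0 entrywise, γ ∈ [0,1), and let w* satisfy X^T D(γP - I)Xw* + X^T D r = 0. Define g(w) = X^T D(γP - I)Xw + X^T D r. Then for all w, (w - w*)^T g(w) ≤ -(1-γ)·λ_min(X^T D X)·‖w - w*‖², where λ_min denotes the smallest eigenvalue of the symmetric positive definite matrix X^T D X. -/
/-!
Write `u = w - w*` and `z = X u`. Since `g` is affine and vanishes at `w*`, `u ⬝ g w` is the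
quadratic form of `Xᵀ D (γP - 1) X` at `u`, i.e. `γ ⟨z, P z⟩_D - ‖z‖_D²`. Stationarity of `d`
and stochasticity of `P` make `P` non-expansive for `⟨·,·⟩_D`: by AM-GM,
`⟨z, P z⟩_D ≤ ∑ᵢⱼ dᵢ Pᵢⱼ (zᵢ² + zⱼ²)/2 = ‖z‖_D²`. Hence the drift is at most
`(γ - 1) ‖X u‖_D² = (γ - 1) uᵀ (Xᵀ D X) u ≤ (γ - 1) λ_min ‖u‖²`.
-/

open Matrix

lemma Matrix.dotProduct_mulVec_transpose_mul_mul {m k R : Type*} [Fintype m] [Fintype k]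
    [CommSemiring R] (X : Matrix m k R) (A : Matrix m m R) (v : k → R) :
    v ⬝ᵥ (Xᵀ * A * X) *ᵥ v = X *ᵥ v ⬝ᵥ A *ᵥ (X *ᵥ v) := by
  rw [← mulVec_mulVec, ← mulVec_mulVec, dotProduct_mulVec, vecMul_transpose]

section StationaryChain

variable {ι : Type*} [Fintype ι] [DecidableEq ι]

lemma Matrix.dotProduct_diagonal_mul_mulVec {R : Type*} [CommSemiring R] (d z : ι → R)
    (C : Matrix ι ι R) :
    z ⬝ᵥ (diagonal d * C) *ᵥ z = ∑ i, ∑ j, d i * C i j * (z i * z j) := by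
  simp only [dotProduct, mulVec, diagonal_mul, Finset.mul_sum]
  exact Finset.sum_congr rfl fun i _ => Finset.sum_congr rfl fun j _ => by ring

lemma Matrix.dotProduct_diagonal_mul_mulVec_le_of_stationary {d : ι → ℝ} {P : Matrix ι ι ℝ}
    (hd : ∀ i, 0 ≤ d i) (hP : ∀ i j, 0 ≤ P i j) (hrow : ∀ i, ∑ j, P i j = 1)
    (hstat : ∀ j, ∑ i, d i * P i j = d j) (z : ι → ℝ) :
    z ⬝ᵥ (diagonal d * P) *ᵥ z ≤ z ⬝ᵥ diagonal d *ᵥ z := by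
  have hrow_sum : ∑ i, ∑ j, d i * P i j * z i ^ 2 = ∑ i, d i * z i ^ 2 := by
    refine Finset.sum_congr rfl fun i _ => ?_
    rw [← Finset.sum_mul, ← Finset.mul_sum, hrow, mul_one]
  have hstat_sum : ∑ i, ∑ j, d i * P i j * z j ^ 2 = ∑ i, d i * z i ^ 2 := by
    rw [Finset.sum_comm]
    exact Finset.sum_congr rfl fun j _ => by rw [← Finset.sum_mul, hstat]
  have hamgm : ∀ i j, d i * P i j * (z i * z j) ≤
      (d i * P i j * z i ^ 2 + d i * P i j * z j ^ 2) / 2 := fun i j => by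
    nlinarith [mul_nonneg (mul_nonneg (hd i) (hP i j)) (sq_nonneg (z i - z j))]
  calc z ⬝ᵥ (diagonal d * P) *ᵥ z = ∑ i, ∑ j, d i * P i j * (z i * z j) :=
        dotProduct_diagonal_mul_mulVec d z P
    _ ≤ ∑ i, ∑ j, (d i * P i j * z i ^ 2 + d i * P i j * z j ^ 2) / 2 :=
        Finset.sum_le_sum fun i _ => Finset.sum_le_sum fun j _ => hamgm i j
    _ = ∑ i, d i * z i ^ 2 := by
        simp only [← Finset.sum_div, Finset.sum_add_distrib, hrow_sum, hstat_sum]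
        ring
    _ = z ⬝ᵥ diagonal d *ᵥ z := by
        simp only [mulVec_diagonal, dotProduct]
        exact Finset.sum_congr rfl fun i _ => by ring

lemma Matrix.dotProduct_transpose_diagonal_mul_smul_sub_one_mulVec_le {κ : Type*} [Fintype κ]
    {d : ι → ℝ} {P : Matrix ι ι ℝ} {γ : ℝ}
    (hd : ∀ i, 0 ≤ d i) (hP : ∀ i j, 0 ≤ P i j) (hrow : ∀ i, ∑ j, P i j = 1)
    (hstat : ∀ j, ∑ i, d i * P i j = d j) (hγ : 0 ≤ γ) (X : Matrix ι κ ℝ) (u : κ → ℝ) :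
    u ⬝ᵥ (Xᵀ * diagonal d * (γ • P - 1) * X) *ᵥ u ≤
      -(1 - γ) * (u ⬝ᵥ (Xᵀ * diagonal d * X) *ᵥ u) := by
  have hP_contr := dotProduct_diagonal_mul_mulVec_le_of_stationary hd hP hrow hstat (X *ᵥ u)
  have hsplit : u ⬝ᵥ (Xᵀ * diagonal d * (γ • P - 1) * X) *ᵥ u =
      γ * (X *ᵥ u ⬝ᵥ (diagonal d * P) *ᵥ (X *ᵥ u)) - X *ᵥ u ⬝ᵥ diagonal d *ᵥ (X *ᵥ u) := by
    rw [Matrix.mul_assoc Xᵀ, dotProduct_mulVec_transpose_mul_mul, mul_sub, mul_smul_comm,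
      mul_one, sub_mulVec, smul_mulVec, dotProduct_sub, dotProduct_smul, smul_eq_mul]
  rw [hsplit, dotProduct_mulVec_transpose_mul_mul]
  nlinarith [mul_le_mul_of_nonneg_left hP_contr hγ]

end StationaryChain

lemma Matrix.PosSemidef.sInf_rayleigh_mul_le {κ : Type*} [Fintype κ] {M : Matrix κ κ ℝ}
    (hM : M.PosSemidef) (u : κ → ℝ) :
    sInf {t : ℝ | ∃ v : κ → ℝ, (∑ i, (v i) ^ 2) = 1 ∧ t = v ⬝ᵥ M *ᵥ v} *
      ∑ i, u i ^ 2 ≤ u ⬝ᵥ M *ᵥ u := by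
  have hnonneg : ∀ v, 0 ≤ v ⬝ᵥ M *ᵥ v := by
    simpa only [star_trivial] using hM.dotProduct_mulVec_nonneg
  rcases eq_or_ne u 0 with rfl | hu
  · simp
  set s := ∑ i, u i ^ 2
  have hs : 0 < s := by
    obtain ⟨i, hi⟩ := Function.ne_iff.mp hu
    exact Finset.sum_pos' (fun j _ => sq_nonneg _) ⟨i, Finset.mem_univ i, sq_pos_of_ne_zero hi⟩
  have hc : (Real.sqrt s)⁻¹ ^ 2 = s⁻¹ := by rw [inv_pow, Real.sq_sqrt hs.le]
  have hunit : ∑ i, ((Real.sqrt s)⁻¹ • u) i ^ 2 = 1 := by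
    simp only [Pi.smul_apply, smul_eq_mul, mul_pow, ← Finset.mul_sum, hc]
    exact inv_mul_cancel₀ hs.ne'
  have hscale : (Real.sqrt s)⁻¹ • u ⬝ᵥ M *ᵥ ((Real.sqrt s)⁻¹ • u) = (u ⬝ᵥ M *ᵥ u) / s := by
    rw [mulVec_smul, smul_dotProduct, dotProduct_smul, smul_eq_mul, smul_eq_mul, ← mul_assoc,
      ← sq, hc, inv_mul_eq_div]
  have hle : sInf {t : ℝ | ∃ v : κ → ℝ, (∑ i, (v i) ^ 2) = 1 ∧ t = v ⬝ᵥ M *ᵥ v} ≤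
      (u ⬝ᵥ M *ᵥ u) / s :=
    csInf_le ⟨0, fun t ⟨v, _, ht⟩ => ht ▸ hnonneg v⟩ ⟨_, hunit, hscale.symm⟩
  exact (le_div_iff₀ hs).mp hle

open Matrix in
theorem td_drift_bound_general {n K : ℕ} (X : Matrix (Fin n) (Fin K) ℝ)
    (d : Fin n → ℝ) (P : Matrix (Fin n) (Fin n) ℝ) (γ : ℝ) (r : Fin n → ℝ)
    (hP_nonneg : ∀ i j, 0 ≤ P i j) (hP_row : ∀ i, ∑ j, P i j = 1)
    (hd_pos : ∀ i, 0 < d i)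
    (hstat : ∀ j, ∑ i, d i * P i j = d j)
    (hγ0 : 0 ≤ γ) (hγ1 : γ < 1)
    (g : (Fin K → ℝ) → (Fin K → ℝ))
    (hg : ∀ w, g w = (Xᵀ * Matrix.diagonal d * (γ • P - 1) * X).mulVec w +
        (Xᵀ * Matrix.diagonal d).mulVec r)
    (wstar : Fin K → ℝ) (hwstar : g wstar = 0)
    (lamMin : ℝ)
    (hlam : lamMin = sInf {t : ℝ | ∃ v : Fin K → ℝ,
        (∑ i, (v i) ^ 2) = 1 ∧ t = v ⬝ᵥ ((Xᵀ * Matrix.diagonal d * X).mulVec v)}) :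
    ∀ w : Fin K → ℝ,
      (w - wstar) ⬝ᵥ g w ≤ -(1 - γ) * lamMin * ∑ i, (w i - wstar i) ^ 2 := by
  intro w
  have hd : ∀ i, 0 ≤ d i := fun i => (hd_pos i).le
  have hgw : g w = (Xᵀ * diagonal d * (γ • P - 1) * X) *ᵥ (w - wstar) := by
    rw [mulVec_sub, ← sub_zero (g w), ← hwstar, hg, hg, add_sub_add_right_eq_sub]
  have hM : (Xᵀ * diagonal d * X).PosSemidef := by
    simpa only [conjTranspose_eq_transpose_of_trivial] using
      (PosSemidef.diagonal hd).conjTranspose_mul_mul_same X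
  calc (w - wstar) ⬝ᵥ g w
        ≤ -(1 - γ) * ((w - wstar) ⬝ᵥ (Xᵀ * diagonal d * X) *ᵥ (w - wstar)) := by
        rw [hgw]
        exact dotProduct_transpose_diagonal_mul_smul_sub_one_mulVec_le hd hP_nonneg hP_row hstat
          hγ0 X _
    _ ≤ -(1 - γ) * lamMin * ∑ i, (w i - wstar i) ^ 2 := by
        rw [mul_assoc, hlam]
        exact mul_le_mul_of_nonpos_left (hM.sInf_rayleigh_mul_le (w - wstar)) (by linarith)

open Matrix in
theorem td_drift_bound {n K : ℕ} (X : Matrix (Fin n) (Fin K) ℝ)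
    (d : Fin n → ℝ) (P : Matrix (Fin n) (Fin n) ℝ) (γ : ℝ) (r : Fin n → ℝ)
    (hX : ∀ v : Fin K → ℝ, X.mulVec v = 0 → v = 0)
    (hP_nonneg : ∀ i j, 0 ≤ P i j) (hP_row : ∀ i, ∑ j, P i j = 1)
    (hd_pos : ∀ i, 0 < d i) (hd_sum : ∑ i, d i = 1)
    (hstat : ∀ j, ∑ i, d i * P i j = d j)
    (hγ0 : 0 ≤ γ) (hγ1 : γ < 1)
    (g : (Fin K → ℝ) → (Fin K → ℝ))
    (hg : ∀ w, g w = (Xᵀ * Matrix.diagonal d * (γ • P - 1) * X).mulVec w +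
        (Xᵀ * Matrix.diagonal d).mulVec r)
    (wstar : Fin K → ℝ) (hwstar : g wstar = 0)
    (lamMin : ℝ)
    (hlam : lamMin = sInf {t : ℝ | ∃ v : Fin K → ℝ,
        (∑ i, (v i) ^ 2) = 1 ∧ t = v ⬝ᵥ ((Xᵀ * Matrix.diagonal d * X).mulVec v)}) :
    ∀ w : Fin K → ℝ,
      (w - wstar) ⬝ᵥ g w ≤ -(1 - γ) * lamMin * ∑ i, (w i - wstar i) ^ 2 :=
  td_drift_bound_general X d P γ r hP_nonneg hP_row hd_pos hstat hγ0 hγ1 g hg wstar hwstar lamMin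
    hlam
end

section
/- Let η, c > 0 with ηc/3 ≠ 2, t0 ≥ 1, and α_i = c/(t0+i). Then E4 := Σ_{i=t0}^{t-1} (Π_{j=i+1}^{t-1}(1 - (η/3)α_j)) α_i² ≤ (4c²/(t+t0)^{ηc/3}) · Σ_{i=t0}^{t-1} 1/(t0+i+1)^{2 - ηc/3}, provided t0 is large enough that (η/3)α_j < 1 for all j and ((t0+i+1)/(t0+i))² ≤ 4. -/
/-!
Each factor satisfies `1 - κ/(t0+j) ≤ exp(-κ/(t0+j))` with `κ = ηc/3`, and the harmonic-type sum
`∑_{j=i+1}^{t-1} 1/(t0+j)` dominates `log(t0+t) - log(t0+i+1)`, so the product is at most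
`((t0+i+1)/(t0+t))^κ`. Together with `α_i² ≤ 4c²/(t0+i+1)²` this bounds the sum termwise.
-/

open Finset Real

theorem log_add_sub_log_add_le_sum_inv {x : ℝ} (hx : 0 < x) {m n : ℕ} (hmn : m ≤ n) :
    log (x + n) - log (x + m) ≤ ∑ j ∈ Ico m n, (x + j)⁻¹ := by
  induction n, hmn using Nat.le_induction with
  | base => simp
  | succ n hmn ih =>
    have hxn : 0 < x + n := by positivity
    have hstep : log (x + (n + 1 : ℕ)) - log (x + n) ≤ (x + n)⁻¹ := by
      rw [← log_div (by positivity) hxn.ne']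
      calc log ((x + (n + 1 : ℕ)) / (x + n)) ≤ (x + (n + 1 : ℕ)) / (x + n) - 1 :=
            log_le_sub_one_of_pos (by positivity)
        _ = (x + n)⁻¹ := by field_simp; push_cast; ring
    rw [sum_Ico_succ_top hmn]
    linarith

theorem prod_one_sub_le_exp_neg_sum {ι : Type*} (s : Finset ι) {f : ι → ℝ}
    (hf : ∀ i ∈ s, f i ≤ 1) : ∏ i ∈ s, (1 - f i) ≤ exp (-∑ i ∈ s, f i) := by
  rw [← sum_neg_distrib, exp_sum]
  exact prod_le_prod (fun i hi ↦ sub_nonneg.2 (hf i hi)) fun i _ ↦ one_sub_le_exp_neg (f i)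

theorem prod_Ico_one_sub_div_le_rpow {κ x : ℝ} (hκ : 0 ≤ κ) (hx : 0 < x) {m n : ℕ}
    (hmn : m ≤ n) (hsmall : ∀ j ∈ Ico m n, κ / (x + j) ≤ 1) :
    ∏ j ∈ Ico m n, (1 - κ / (x + j)) ≤ ((x + m) / (x + n)) ^ κ := by
  have hxm : 0 < x + m := by positivity
  have hxn : 0 < x + n := by positivity
  calc ∏ j ∈ Ico m n, (1 - κ / (x + j))
      ≤ exp (-∑ j ∈ Ico m n, κ / (x + j)) := prod_one_sub_le_exp_neg_sum _ hsmall
    _ ≤ exp (κ * log ((x + m) / (x + n))) := by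
        rw [exp_le_exp, log_div hxm.ne' hxn.ne']
        simp_rw [div_eq_mul_inv, ← mul_sum]
        nlinarith [log_add_sub_log_add_le_sum_inv hx hmn]
    _ = ((x + m) / (x + n)) ^ κ := by rw [rpow_def_of_pos (by positivity), mul_comm]

theorem rpow_div_mul_div_sq_eq {a b : ℝ} (ha : 0 < a) (hb : 0 < b) (κ C : ℝ) :
    (b / a) ^ κ * (C / b ^ 2) = C / a ^ κ * (1 / b ^ (2 - κ)) := by
  rw [div_rpow hb.le ha.le, rpow_sub hb, rpow_two]
  field_simp

theorem E4_bound_general (η c : ℝ) (hη : 0 < η) (hc : 0 < c)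
    (t0 t : ℕ) (ht0 : 1 ≤ t0)
    (α : ℕ → ℝ) (hα : ∀ i, α i = c / ((t0 : ℝ) + i))
    (hsmall : ∀ j : ℕ, η / 3 * α j < 1)
    (hratio : ∀ i : ℕ, t0 ≤ i → (((t0 : ℝ) + i + 1) / ((t0 : ℝ) + i)) ^ 2 ≤ 4) :
    (∑ i ∈ Finset.Ico t0 t,
        (∏ j ∈ Finset.Ico (i + 1) t, (1 - η / 3 * α j)) * (α i) ^ 2) ≤
      (4 * c ^ 2 / ((t : ℝ) + t0) ^ (η * c / 3)) *
        ∑ i ∈ Finset.Ico t0 t, 1 / ((t0 : ℝ) + i + 1) ^ (2 - η * c / 3) := by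
  have ht0_pos : (0 : ℝ) < t0 := by exact_mod_cast ht0
  have hstep : ∀ j, η / 3 * α j = η * c / 3 / (t0 + j) := fun j ↦ by
    rw [hα]; ring
  rw [mul_sum]
  refine sum_le_sum fun i hi ↦ ?_
  obtain ⟨hti, hit⟩ := mem_Ico.mp hi
  have hprod : ∏ j ∈ Ico (i + 1) t, (1 - η / 3 * α j)
      ≤ (((t0 : ℝ) + i + 1) / (t + t0)) ^ (η * c / 3) := by
    simp_rw [hstep]
    convert prod_Ico_one_sub_div_le_rpow (by positivity) ht0_pos hit
      (fun j _ ↦ (hstep j ▸ hsmall j).le) using 2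
    push_cast; ring
  have hα_sq : α i ^ 2 ≤ 4 * c ^ 2 / ((t0 : ℝ) + i + 1) ^ 2 := by
    have hti_pos : (0 : ℝ) < t0 + i := by positivity
    have := hratio i hti
    rw [div_pow, div_le_iff₀ (by positivity)] at this
    rw [hα, div_pow, div_le_div_iff₀ (by positivity) (by positivity)]
    nlinarith [sq_nonneg c]
  calc (∏ j ∈ Ico (i + 1) t, (1 - η / 3 * α j)) * α i ^ 2
      ≤ (((t0 : ℝ) + i + 1) / (t + t0)) ^ (η * c / 3) * (4 * c ^ 2 / ((t0 : ℝ) + i + 1) ^ 2) :=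
        mul_le_mul hprod hα_sq (sq_nonneg _) (by positivity)
    _ = _ := rpow_div_mul_div_sq_eq (by positivity) (by positivity) _ _

theorem E4_bound (η c : ℝ) (hη : 0 < η) (hc : 0 < c) (hne : η * c / 3 ≠ 2)
    (t0 t : ℕ) (ht0 : 1 ≤ t0) (ht : t0 < t)
    (α : ℕ → ℝ) (hα : ∀ i, α i = c / ((t0 : ℝ) + i))
    (hsmall : ∀ j : ℕ, η / 3 * α j < 1)
    (hratio : ∀ i : ℕ, t0 ≤ i → (((t0 : ℝ) + i + 1) / ((t0 : ℝ) + i)) ^ 2 ≤ 4) :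
    (∑ i ∈ Finset.Ico t0 t,
        (∏ j ∈ Finset.Ico (i + 1) t, (1 - η / 3 * α j)) * (α i) ^ 2) ≤
      (4 * c ^ 2 / ((t : ℝ) + t0) ^ (η * c / 3)) *
        ∑ i ∈ Finset.Ico t0 t, 1 / ((t0 : ℝ) + i + 1) ^ (2 - η * c / 3) :=
  E4_bound_general η c hη hc t0 t ht0 α hα hsmall hratio
end
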